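/- For the time reversal of the spatially homogeneous upward run chain on (ℕ^k, +) with parameters r_1, ..., r_k (r = Σ r_i < 1), the downward transition probabilities are Q(x, x - u_i) = x_i / (Σ_{j=1}^k x_j) for x ≠ 0 with x_i ≥ 1. In particular, these probabilities do not depend on (r_1, ..., r_k). -/

import Mathlib

open scoped ENNReal

noncomputable section
open scoped Classical

/-- The probability of following the word `l` of successive states, starting at `x`,
under the transition kernel `P`. -/
def wordProb {S : Type*} (P : S → S → ℝ≥0∞) : S → List S → ℝ≥0∞
  | _, [] => 1
  | x, y :: l => P x y * wordProb P y l

/-- `hitProb P e x = Pr_e(T_x ≤ T_e)`: the probability, starting at `e`, that the chain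
reaches `x` (at a positive time) before returning to `e`; by convention it is `1` at `e`. -/
def hitProb {S : Type*} (P : S → S → ℝ≥0∞) (e x : S) : ℝ≥0∞ :=
  if x = e then 1
  else ∑' l : {l : List S // x ∉ l ∧ e ∉ l}, wordProb P e (l.1 ++ [x])

/-- `survival P e n = Pr_e(T_e > n)`: the chain avoids `e` during the first `n` steps. -/
def survival {S : Type*} (P : S → S → ℝ≥0∞) (e : S) (n : ℕ) : ℝ≥0∞ :=
  ∑' l : {l : List S // l.length = n ∧ e ∉ l}, wordProb P e l.1

/-- `returnAt P e n = Pr_e(T_e = n + 1)`: first return to `e` at time `n+1`. -/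
def returnAt {S : Type*} (P : S → S → ℝ≥0∞) (e : S) (n : ℕ) : ℝ≥0∞ :=
  ∑' l : {l : List S // l.length = n ∧ e ∉ l}, wordProb P e (l.1 ++ [e])

/-- The chain is recurrent (at `e`) if it returns to `e` with probability one. -/
def Recurrent {S : Type*} (P : S → S → ℝ≥0∞) (e : S) : Prop :=
  ∑' n : ℕ, returnAt P e n = 1

/-- The chain is positive recurrent at `e` if it is recurrent and the expected return
time `E_e(T_e) = ∑_n Pr_e(T_e > n)` is finite. -/
def PositiveRecurrent {S : Type*} (P : S → S → ℝ≥0∞) (e : S) : Prop :=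
  Recurrent P e ∧ ∑' n : ℕ, survival P e n < ⊤

/-- `n`-step transition probabilities. -/
def stepN {S : Type*} (P : S → S → ℝ≥0∞) : ℕ → S → S → ℝ≥0∞
  | 0, x, y => if x = y then 1 else 0
  | n + 1, x, y => ∑' z : S, P x z * stepN P n z y

variable {S : Type*} [PartialOrder S] [OrderBot S]

/-- An upward run kernel: `P(x,y) > 0` iff `y` covers `x` or `y = e`. -/
def IsUpwardRunKernel (P : S → S → ℝ≥0∞) : Prop :=
  (∀ x : S, ∑' y : S, P x y = 1) ∧ ∀ x y : S, 0 < P x y ↔ (x ⋖ y ∨ y = ⊥)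

/-- A downward run kernel: `Q(e,y) > 0` for all `y`, and for `x ≠ e`,
`Q(x,y) > 0` iff `x` covers `y`. -/
def IsDownwardRunKernel (Q : S → S → ℝ≥0∞) : Prop :=
  (∀ x : S, ∑' y : S, Q x y = 1) ∧ (∀ y : S, 0 < Q ⊥ y) ∧
    ∀ x : S, x ≠ ⊥ → ∀ y : S, (0 < Q x y ↔ y ⋖ x)

/-- Every chain from `⊥` to `x` is finite. -/
def BoundedChainsFinite (S : Type*) [PartialOrder S] [OrderBot S] : Prop :=
  ∀ x : S, ∀ C : Set S, C ⊆ Set.Iic x → IsChain (· ≤ ·) C → C.Finite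

/-- `l` is a covering path from `⊥` ending at `x` (the path is `⊥ :: l`). -/
def IsPathTo (l : List S) (x : S) : Prop :=
  List.Chain (· ⋖ ·) ⊥ l ∧ (⊥ :: l).getLast (List.cons_ne_nil _ _) = x

/-- `x` is at level `n`: some covering path from `⊥` to `x` has length `n`. -/
def InLevel (x : S) (n : ℕ) : Prop :=
  ∃ l : List S, IsPathTo l x ∧ l.length = n


/-- The spatially homogeneous upward run kernel on `ℕ^k` (as in Statement 18). -/
def upKernelNk' {k : ℕ} (r : Fin k → ℝ≥0∞) (x y : Fin k → ℕ) : ℝ≥0∞ :=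
  (if y = 0 then 1 - ∑ i, r i else 0) +
    ∑ i : Fin k, if y = x + Pi.single i 1 then r i else 0

lemma add_single_ne_zero {k : ℕ} (x : Fin k → ℕ) (i : Fin k) :
    x + Pi.single i 1 ≠ 0 := by
  intro h
  have := congrFun h i
  simp [Pi.add_apply] at this

lemma single_inj {k : ℕ} {i j : Fin k} (h : (Pi.single i 1 : Fin k → ℕ) = Pi.single j 1) :
    i = j := by
  by_contra hne
  have := congrFun h i
  simp [Pi.single_apply, Ne.symm hne] at this

lemma upK_step {k : ℕ} (r : Fin k → ℝ≥0∞) (x : Fin k → ℕ) (i : Fin k) :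
    upKernelNk' r x (x + Pi.single i 1) = r i := by
  unfold upKernelNk'
  rw [if_neg (add_single_ne_zero x i), zero_add]
  rw [Finset.sum_eq_single i]
  · rw [if_pos rfl]
  · intro j _ hj
    rw [if_neg]
    intro h
    exact hj (single_inj (add_left_cancel h)).symm
  · intro h; exact absurd (Finset.mem_univ i) h

lemma upK_support {k : ℕ} (r : Fin k → ℝ≥0∞) (x y : Fin k → ℕ)
    (h : upKernelNk' r x y ≠ 0) (hy : y ≠ 0) : ∃ i, y = x + Pi.single i 1 := by
  unfold upKernelNk' at h
  rw [if_neg hy, zero_add] at h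
  obtain ⟨i, -, hi⟩ := Finset.exists_ne_zero_of_sum_ne_zero h
  by_cases hc : y = x + Pi.single i 1
  · exact ⟨i, hc⟩
  · rw [if_neg hc] at hi; exact absurd rfl hi

lemma sub_single_apply {k : ℕ} (x : Fin k → ℕ) (i j : Fin k) :
    (x - Pi.single i 1 : Fin k → ℕ) j = if j = i then x j - 1 else x j := by
  by_cases h : j = i
  · subst h; simp
  · simp [Pi.sub_apply, Pi.single_apply, Ne.symm h, h]

lemma sub_single_add {k : ℕ} (x : Fin k → ℕ) (i : Fin k) (hi : 1 ≤ x i) :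
    (x - Pi.single i 1 : Fin k → ℕ) + Pi.single i 1 = x := by
  funext j
  rw [Pi.add_apply, sub_single_apply]
  by_cases h : j = i
  · subst h; simp; omega
  · simp [h, Pi.single_apply]

lemma sum_sub_single {k : ℕ} (x : Fin k → ℕ) (i : Fin k) (hi : 1 ≤ x i) :
    (∑ j, (x - Pi.single i 1 : Fin k → ℕ) j) + 1 = ∑ j, x j := by
  conv_rhs => rw [← sub_single_add x i hi]
  simp only [Pi.add_apply]
  rw [Finset.sum_add_distrib]
  simp [Finset.sum_pi_single]

open Nat in
lemma prod_fact_sub {k : ℕ} (x : Fin k → ℕ) (i : Fin k) (hi : 1 ≤ x i) :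
    (∏ j, (x j)!) = x i * ∏ j, ((x - Pi.single i 1 : Fin k → ℕ) j)! := by
  have e1 := (Finset.mul_prod_erase Finset.univ (fun j => (x j)!) (Finset.mem_univ i)).symm
  have e2 := (Finset.mul_prod_erase Finset.univ
    (fun j => ((x - Pi.single i 1 : Fin k → ℕ) j)!) (Finset.mem_univ i)).symm
  rw [e1, e2, ← mul_assoc]
  congr 1
  · rw [sub_single_apply]
    simp only [if_pos rfl]
    obtain ⟨m, hm⟩ := Nat.exists_eq_add_of_le hi
    rw [hm]
    simp [Nat.factorial_succ, Nat.add_comm 1 m]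
  · apply Finset.prod_congr rfl
    intro j hj
    rw [sub_single_apply, if_neg (Finset.mem_erase.1 hj).1]

open Nat in
lemma nat_mult_key {k : ℕ} (x : Fin k → ℕ) (i : Fin k) (hi : 1 ≤ x i) :
    (∑ j, x j) * Nat.multinomial Finset.univ (x - Pi.single i 1) =
      x i * Nat.multinomial Finset.univ x := by
  set y : Fin k → ℕ := x - Pi.single i 1 with hy
  have specx := Nat.multinomial_spec Finset.univ x
  have specy := Nat.multinomial_spec Finset.univ y
  have hsum : (∑ j, y j) + 1 = ∑ j, x j := sum_sub_single x i hi
  have hprod := prod_fact_sub x i hi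
  have hP : 0 < ∏ j, (y j)! := Finset.prod_pos fun j _ => Nat.factorial_pos _
  apply Nat.eq_of_mul_eq_mul_left hP
  calc (∏ j, (y j)!) * ((∑ j, x j) * Nat.multinomial Finset.univ y)
      = ((∑ j, y j) + 1) * ((∏ j, (y j)!) * Nat.multinomial Finset.univ y) := by
        rw [hsum]; ring
    _ = ((∑ j, y j) + 1) * ((∑ j, y j))! := by rw [specy]
    _ = ((∑ j, y j) + 1)! := (Nat.factorial_succ _).symm
    _ = (∑ j, x j)! := by rw [hsum]
    _ = (∏ j, (x j)!) * Nat.multinomial Finset.univ x := specx.symm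
    _ = (∏ j, (y j)!) * (x i * Nat.multinomial Finset.univ x) := by rw [hprod]; ring

open Nat in
lemma nat_mult_sum {k : ℕ} (x : Fin k → ℕ) (hx : x ≠ 0) :
    ∑ j ∈ Finset.univ.filter (fun j => 1 ≤ x j),
        Nat.multinomial Finset.univ (x - Pi.single j 1)
      = Nat.multinomial Finset.univ x := by
  have hs : 0 < ∑ j, x j := by
    obtain ⟨i, hi⟩ := Function.ne_iff.1 hx
    exact lt_of_lt_of_le (Nat.pos_of_ne_zero hi)
      (Finset.single_le_sum (fun j _ => Nat.zero_le _) (Finset.mem_univ i))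
  apply Nat.eq_of_mul_eq_mul_left hs
  rw [Finset.mul_sum]
  calc ∑ j ∈ Finset.univ.filter (fun j => 1 ≤ x j),
        (∑ j', x j') * Nat.multinomial Finset.univ (x - Pi.single j 1)
      = ∑ j ∈ Finset.univ.filter (fun j => 1 ≤ x j), x j * Nat.multinomial Finset.univ x := by
        apply Finset.sum_congr rfl
        intro j hj
        exact nat_mult_key x j (Finset.mem_filter.1 hj).2
    _ = (∑ j ∈ Finset.univ.filter (fun j => 1 ≤ x j), x j) * Nat.multinomial Finset.univ x := by
        rw [Finset.sum_mul]
    _ = (∑ j, x j) * Nat.multinomial Finset.univ x := by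
        congr 1
        apply Finset.sum_filter_of_ne
        intro j _ hj
        omega

def pathOf {k : ℕ} : (Fin k → ℕ) → List (Fin k) → List (Fin k → ℕ)
  | _, [] => []
  | s, j :: w => (s + Pi.single j 1) :: pathOf (s + Pi.single j 1) w

def cnt {k : ℕ} (w : List (Fin k)) : Fin k → ℕ := fun i => w.count i

lemma cnt_nil {k : ℕ} : cnt ([] : List (Fin k)) = 0 := by
  funext i; simp [cnt]

lemma cnt_cons {k : ℕ} (j : Fin k) (w : List (Fin k)) :
    cnt (j :: w) = cnt w + Pi.single j 1 := by
  funext i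
  simp only [cnt, List.count_cons, Pi.add_apply, Pi.single_apply]
  by_cases h : i = j
  · simp [h]
  · simp [h, Ne.symm h]

lemma wordProb_pathOf {k : ℕ} (r : Fin k → ℝ≥0∞) (w : List (Fin k)) :
    ∀ s, wordProb (upKernelNk' r) s (pathOf s w) = (w.map r).prod := by
  induction w with
  | nil => intro s; simp [pathOf, wordProb]
  | cons j w ih =>
      intro s
      simp only [pathOf, wordProb, List.map_cons, List.prod_cons]
      rw [upK_step, ih]

lemma pathOf_append_single {k : ℕ} (w : List (Fin k)) (j : Fin k) :
    ∀ s, pathOf s (w ++ [j]) = pathOf s w ++ [s + cnt w + Pi.single j 1] := by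
  induction w with
  | nil => intro s; simp [pathOf, cnt_nil]
  | cons a w ih =>
      intro s
      simp only [List.cons_append, pathOf]
      rw [ih, cnt_cons]
      congr 2
      ring_nf

lemma pathOf_chain {k : ℕ} (w : List (Fin k)) :
    ∀ s, List.Chain (· < ·) s (pathOf s w) := by
  induction w with
  | nil => intro s; simp [pathOf]; exact List.Chain.nil
  | cons j w ih =>
      intro s
      refine List.Chain.cons ?_ (ih _)
      have : (0 : Fin k → ℕ) < Pi.single j 1 := by
        refine lt_of_le_of_ne (fun i => Nat.zero_le _) ?_
        intro h
        have := congrFun h j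
        simp at this
      simpa using lt_add_of_pos_right s this

lemma pathOf_inj {k : ℕ} (w₁ : List (Fin k)) :
    ∀ w₂ s, pathOf s w₁ = pathOf s w₂ → w₁ = w₂ := by
  induction w₁ with
  | nil =>
      intro w₂ s h
      cases w₂ with
      | nil => rfl
      | cons b w₂ => simp [pathOf] at h
  | cons a w₁ ih =>
      intro w₂ s h
      cases w₂ with
      | nil => simp [pathOf] at h
      | cons b w₂ =>
          simp only [pathOf, List.cons.injEq] at h
          have hab : a = b := single_inj (add_left_cancel h.1)
          subst hab
          exact congrArg _ (ih w₂ _ h.2)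

lemma exists_word_of_wordProb_ne_zero {k : ℕ} (r : Fin k → ℝ≥0∞) (m : List (Fin k → ℕ)) :
    ∀ s, (0 : Fin k → ℕ) ∉ m → wordProb (upKernelNk' r) s m ≠ 0 →
      ∃ w, pathOf s w = m := by
  induction m with
  | nil => intro s _ _; exact ⟨[], rfl⟩
  | cons y m ih =>
      intro s h0 hp
      simp only [wordProb, mul_ne_zero_iff] at hp
      have hy0 : y ≠ 0 := fun h => h0 (h ▸ List.mem_cons_self (a := y) (l := m))
      obtain ⟨i, hi⟩ := upK_support r s y hp.1 hy0
      obtain ⟨w, hw⟩ := ih y (fun h => h0 (List.mem_cons_of_mem _ h)) hp.2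
      exact ⟨i :: w, by simp only [pathOf, ← hi, hw]⟩

lemma cnt_pathOf_getLast {k : ℕ} (w : List (Fin k)) (j : Fin k) (s : Fin k → ℕ) :
    (pathOf s (w ++ [j])).getLast? = some (s + cnt (w ++ [j])) := by
  rw [pathOf_append_single, List.getLast?_append_cons]
  simp only [List.getLast?_singleton, Option.some.injEq]
  funext i
  simp only [cnt, List.count_append, Pi.add_apply, Pi.single_apply, List.count_singleton]
  by_cases h : i = j
  · simp [h]; ring
  · simp [h, Ne.symm h]

lemma cnt_concat {k : ℕ} (w : List (Fin k)) (j : Fin k) :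
    cnt (w ++ [j]) = cnt w + Pi.single j 1 := by
  funext i
  simp only [cnt, List.count_append, Pi.add_apply, Pi.single_apply, List.count_singleton]
  by_cases h : i = j
  · simp [h]
  · simp [h, Ne.symm h]

lemma map_prod_ne_zero {k : ℕ} (r : Fin k → ℝ≥0∞) (hr : ∀ i, 0 < r i) (w : List (Fin k)) :
    (w.map r).prod ≠ 0 := by
  induction w with
  | nil => simp
  | cons a w ih => simpa using mul_ne_zero (hr a).ne' ih

lemma pathOf_eq_dropLast_concat {k : ℕ} {x : Fin k → ℕ} (hx : x ≠ 0)
    {w : List (Fin k)} (hw : cnt w = x) :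
    pathOf 0 w = (pathOf 0 w).dropLast ++ [x] := by
  obtain rfl | ⟨w', j, rfl⟩ := List.eq_nil_or_concat w
  · exact absurd (cnt_nil ▸ hw) (Ne.symm hx)
  · rw [List.concat_eq_append] at hw ⊢
    rw [pathOf_append_single]
    have hlast : (0 : Fin k → ℕ) + cnt w' + Pi.single j 1 = x := by
      rw [zero_add, ← cnt_concat, hw]
    rw [hlast, List.dropLast_concat]

lemma hitProb_eq_word_sum {k : ℕ} (r : Fin k → ℝ≥0∞) (hr : ∀ i, 0 < r i)
    (x : Fin k → ℕ) (hx : x ≠ 0) :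
    hitProb (upKernelNk' r) 0 x = ∑' w : {w : List (Fin k) // cnt w = x}, (w.1.map r).prod := by
  rw [hitProb, if_neg hx]
  set f : {l : List (Fin k → ℕ) // x ∉ l ∧ (0 : Fin k → ℕ) ∉ l} → ℝ≥0∞ :=
    fun l => wordProb (upKernelNk' r) 0 (l.1 ++ [x]) with hf
  set g : {w : List (Fin k) // cnt w = x} → ℝ≥0∞ := fun w => (w.1.map r).prod with hg
  have key : ∀ w : {w : List (Fin k) // cnt w = x},
      x ∉ (pathOf 0 w.1).dropLast ∧ (0 : Fin k → ℕ) ∉ (pathOf 0 w.1).dropLast := by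
    rintro ⟨w, hw⟩
    have hch := (List.isChain_iff_pairwise.1 (pathOf_chain w 0))
    rw [pathOf_eq_dropLast_concat hx hw] at hch
    rw [List.pairwise_cons] at hch
    constructor
    · intro hmem
      have h1 : ∀ y ∈ (pathOf 0 w).dropLast, ∀ z ∈ [x], y < z :=
        (List.pairwise_append.1 hch.2).2.2
      exact lt_irrefl x (h1 x hmem x (List.mem_singleton_self x))
    · intro hmem
      exact lt_irrefl 0 (hch.1 0 (List.mem_append_left _ hmem))
  refine tsum_eq_tsum_of_ne_zero_bij
    (fun w => ⟨(pathOf 0 w.1.1).dropLast, (key w.1).1, (key w.1).2⟩) ?_ ?_ ?_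
  · rintro ⟨⟨w₁, hw₁⟩, hs₁⟩ ⟨⟨w₂, hw₂⟩, hs₂⟩ h
    simp only [Subtype.mk.injEq] at h ⊢
    have : pathOf 0 w₁ = pathOf 0 w₂ := by
      rw [pathOf_eq_dropLast_concat hx hw₁, pathOf_eq_dropLast_concat hx hw₂, h]
    exact pathOf_inj w₁ w₂ 0 this
  · rintro ⟨l, hxl, h0l⟩ hfl
    simp only [Function.mem_support, hf] at hfl
    have h0 : (0 : Fin k → ℕ) ∉ l ++ [x] := by
      intro h
      rcases List.mem_append.1 h with h | h
      · exact h0l h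
      · exact hx (List.mem_singleton.1 h).symm
    obtain ⟨w, hwp⟩ := exists_word_of_wordProb_ne_zero r (l ++ [x]) 0 h0 hfl
    have hwcnt : cnt w = x := by
      obtain rfl | ⟨w', j, rfl⟩ := List.eq_nil_or_concat w
      · simp [pathOf] at hwp
      · rw [List.concat_eq_append] at hwp ⊢
        have := congrArg List.getLast? hwp
        rw [pathOf_append_single, List.getLast?_concat, List.getLast?_concat,
          Option.some.injEq] at this
        rw [cnt_concat, ← this, zero_add]
    refine ⟨⟨⟨w, hwcnt⟩, ?_⟩, ?_⟩
    · simp only [Function.mem_support, hg]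
      exact map_prod_ne_zero r hr w
    · simp only [Subtype.mk.injEq]
      rw [hwp, List.dropLast_concat]
  · rintro ⟨⟨w, hw⟩, hs⟩
    simp only [hf, hg]
    rw [← pathOf_eq_dropLast_concat hx hw, wordProb_pathOf]

lemma cnt_eq_zero {k : ℕ} {w : List (Fin k)} (h : cnt w = 0) : w = [] := by
  cases w with
  | nil => rfl
  | cons a t =>
      have := congrFun h a
      simp [cnt, List.count_cons_self] at this

def consEquiv {k : ℕ} (x : Fin k → ℕ) (hx : x ≠ 0) :
    (Σ j : Fin k, {w : List (Fin k) // cnt (j :: w) = x}) ≃ {w : List (Fin k) // cnt w = x} where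
  toFun p := ⟨p.1 :: p.2.1, p.2.2⟩
  invFun w :=
    match w with
    | ⟨[], h⟩ => False.elim (hx (by rw [← h, cnt_nil]))
    | ⟨j :: t, h⟩ => ⟨j, t, h⟩
  left_inv := by rintro ⟨j, t, h⟩; rfl
  right_inv := by
    rintro ⟨(_ | ⟨j, t⟩), h⟩
    · exact False.elim (hx (by rw [← h, cnt_nil]))
    · rfl

def G {k : ℕ} (r : Fin k → ℝ≥0∞) (x : Fin k → ℕ) : ℝ≥0∞ :=
  ∑' w : {w : List (Fin k) // cnt w = x}, (w.1.map r).prod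

lemma G_zero {k : ℕ} (r : Fin k → ℝ≥0∞) : G r 0 = 1 := by
  unfold G
  rw [tsum_eq_single ⟨[], cnt_nil⟩]
  · simp
  · rintro ⟨w, hw⟩ hb
    exact absurd (Subtype.ext (cnt_eq_zero hw)) hb

lemma cnt_add_single_iff {k : ℕ} {x y : Fin k → ℕ} {j : Fin k} (hj : 1 ≤ x j) :
    y + Pi.single j 1 = x ↔ y = x - Pi.single j 1 := by
  constructor
  · rintro rfl
    funext i
    rw [sub_single_apply]
    by_cases h : i = j
    · subst h; simp
    · simp [h, Pi.single_apply]
  · rintro rfl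
    exact sub_single_add x j hj

lemma G_rec {k : ℕ} (r : Fin k → ℝ≥0∞) (x : Fin k → ℕ) (hx : x ≠ 0) :
    G r x = ∑ j : Fin k, if 1 ≤ x j then r j * G r (x - Pi.single j 1) else 0 := by
  unfold G
  rw [← Equiv.tsum_eq (consEquiv x hx)]
  rw [ENNReal.tsum_sigma']
  rw [tsum_fintype]
  apply Finset.sum_congr rfl
  intro j _
  by_cases hj : 1 ≤ x j
  · rw [if_pos hj]
    have hiff : ∀ w : List (Fin k), cnt (j :: w) = x ↔ cnt w = x - Pi.single j 1 := by
      intro w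
      rw [cnt_cons, cnt_add_single_iff hj]
    set he : {w : List (Fin k) // cnt (j :: w) = x} ≃
        {w : List (Fin k) // cnt w = x - Pi.single j 1} := Equiv.subtypeEquivRight hiff with hhe
    calc ∑' w : {w : List (Fin k) // cnt (j :: w) = x},
          (((consEquiv x hx) ⟨j, w⟩).1.map r).prod
        = ∑' w : {w : List (Fin k) // cnt (j :: w) = x}, r j * ((w.1.map r).prod) := by
          apply tsum_congr
          intro w
          simp [consEquiv]
      _ = r j * ∑' w : {w : List (Fin k) // cnt (j :: w) = x}, ((w.1.map r).prod) := by
          rw [ENNReal.tsum_mul_left]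
      _ = r j * ∑' w : {w : List (Fin k) // cnt w = x - Pi.single j 1}, ((w.1.map r).prod) := by
          congr 1
          rw [← Equiv.tsum_eq he]
          apply tsum_congr
          intro w
          rw [hhe, Equiv.subtypeEquivRight_apply]
  · rw [if_neg hj]
    have : IsEmpty {w : List (Fin k) // cnt (j :: w) = x} := by
      constructor
      rintro ⟨w, hw⟩
      have := congrFun hw j
      simp [cnt, List.count_cons_self] at this
      omega
    simp [tsum_empty]

lemma prod_pow_single {k : ℕ} (r : Fin k → ℝ≥0∞) (y : Fin k → ℕ) (j : Fin k) :
    (∏ i, r i ^ ((y + Pi.single j 1 : Fin k → ℕ) i)) = r j * ∏ i, r i ^ y i := by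
  have : ∀ i, r i ^ ((y + Pi.single j 1 : Fin k → ℕ) i)
      = r i ^ y i * r i ^ (Pi.single j 1 : Fin k → ℕ) i := by
    intro i; rw [Pi.add_apply, pow_add]
  rw [Finset.prod_congr rfl fun i _ => this i, Finset.prod_mul_distrib]
  have h2 : (∏ i, r i ^ (Pi.single j 1 : Fin k → ℕ) i) = r j := by
    rw [Finset.prod_eq_single j]
    · simp
    · intro b _ hb; simp [Pi.single_apply, hb]
    · intro h; exact absurd (Finset.mem_univ j) h
  rw [h2]; ring

open Nat in
lemma multinomial_zero_fun {k : ℕ} : Nat.multinomial Finset.univ (0 : Fin k → ℕ) = 1 := by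
  have := Nat.multinomial_spec Finset.univ (0 : Fin k → ℕ)
  simpa using this

lemma G_closed {k : ℕ} (r : Fin k → ℝ≥0∞) :
    ∀ n (x : Fin k → ℕ), (∑ j, x j) = n →
      G r x = (Nat.multinomial Finset.univ x : ℝ≥0∞) * ∏ i, r i ^ x i := by
  intro n
  induction n using Nat.strong_induction_on with
  | _ n ih =>
    intro x hxn
    by_cases hx : x = 0
    · subst hx
      simp [G_zero, multinomial_zero_fun]
    · rw [G_rec r x hx]
      have hterm : ∀ j : Fin k, (if 1 ≤ x j then r j * G r (x - Pi.single j 1) else 0)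
          = if 1 ≤ x j then
              (Nat.multinomial Finset.univ (x - Pi.single j 1) : ℝ≥0∞) * ∏ i, r i ^ x i
            else 0 := by
        intro j
        by_cases hj : 1 ≤ x j
        · rw [if_pos hj, if_pos hj]
          have hsum := sum_sub_single x j hj
          have hlt : (∑ i, (x - Pi.single j 1 : Fin k → ℕ) i) < n := by omega
          rw [ih _ hlt (x - Pi.single j 1) rfl]
          have hprod : (∏ i, r i ^ x i)
              = r j * ∏ i, r i ^ ((x - Pi.single j 1 : Fin k → ℕ) i) := by
            conv_lhs => rw [← sub_single_add x j hj]
            exact prod_pow_single r _ j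
          rw [hprod]; ring
        · rw [if_neg hj, if_neg hj]
      rw [Finset.sum_congr rfl fun j _ => hterm j]
      rw [← Finset.sum_filter]
      rw [← Finset.sum_mul, ← Nat.cast_sum, nat_mult_sum x hx]

lemma hitProb_closed {k : ℕ} (r : Fin k → ℝ≥0∞) (hr : ∀ i, 0 < r i) (x : Fin k → ℕ) :
    hitProb (upKernelNk' r) 0 x
      = (Nat.multinomial Finset.univ x : ℝ≥0∞) * ∏ i, r i ^ x i := by
  by_cases hx : x = 0
  · subst hx
    rw [hitProb, if_pos rfl]
    simp [multinomial_zero_fun]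
  · rw [hitProb_eq_word_sum r hr x hx]
    exact G_closed r _ x rfl


/-- the time reversal `Q(y,x) = (F(x)/F(y)) P(x,y)` of the spatially
homogeneous upward run chain on `ℕ^k` has downward transition probabilities
`Q(x, x - uᵢ) = xᵢ / ∑ⱼ xⱼ`, independent of `(r₁, …, r_k)`. -/
theorem reversed_chain_Nk {k : ℕ} (r : Fin k → ℝ≥0∞) (hr : ∀ i, 0 < r i)
    (hr1 : ∑ i, r i < 1) :
    ∀ x : Fin k → ℕ, x ≠ 0 → ∀ i : Fin k, 1 ≤ x i →
      (hitProb (upKernelNk' r) 0 (x - Pi.single i 1) / hitProb (upKernelNk' r) 0 x)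
          * upKernelNk' r (x - Pi.single i 1) x
        = (x i : ℝ≥0∞) / ((∑ j, x j : ℕ) : ℝ≥0∞) := by
  intro x hx i hi
  have hrt : ∀ j, r j ≠ ⊤ := by
    intro j
    have hle : r j ≤ ∑ i', r i' :=
      Finset.single_le_sum (f := r) (fun i' _ => zero_le) (Finset.mem_univ j)
    exact (lt_of_le_of_lt hle (lt_of_lt_of_le hr1 le_top)).ne
  have hkernel : upKernelNk' r (x - Pi.single i 1) x = r i := by
    have h := upK_step r (x - Pi.single i 1) i
    rwa [sub_single_add x i hi] at h
  rw [hitProb_closed r hr, hitProb_closed r hr, hkernel]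
  set M' := (Nat.multinomial Finset.univ (x - Pi.single i 1) : ℝ≥0∞) with hM'
  set M := (Nat.multinomial Finset.univ x : ℝ≥0∞) with hM
  set B' := ∏ i', r i' ^ ((x - Pi.single i 1 : Fin k → ℕ) i') with hB'
  set B := ∏ i', r i' ^ x i' with hB
  have hBB : B = r i * B' := by
    rw [hB, hB']
    conv_lhs => rw [← sub_single_add x i hi]
    exact prod_pow_single r _ i
  have hB0 : B ≠ 0 := by
    rw [hB]
    exact (CanonicallyOrderedAdd.prod_pos.2 fun j _ => ENNReal.pow_pos (hr j) _).ne'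
  have hBt : B ≠ ⊤ := by
    rw [hB]
    exact (ENNReal.prod_lt_top fun j _ => ENNReal.pow_lt_top (hrt j).lt_top).ne
  have hM0 : M ≠ 0 := by
    rw [hM]
    exact_mod_cast (Nat.cast_pos.2 (Nat.multinomial_pos _ _)).ne'
  have hMt : M ≠ ⊤ := ENNReal.natCast_ne_top _
  have hs0 : ((∑ j, x j : ℕ) : ℝ≥0∞) ≠ 0 := by
    have : 1 ≤ ∑ j, x j :=
      le_trans hi (Finset.single_le_sum (fun j _ => Nat.zero_le _) (Finset.mem_univ i))
    exact_mod_cast (Nat.cast_pos.2 this).ne'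
  have hst : ((∑ j, x j : ℕ) : ℝ≥0∞) ≠ ⊤ := ENNReal.natCast_ne_top _
  calc M' * B' / (M * B) * r i
      = r i * (M' * B') / (M * B) := by rw [mul_comm, ← mul_div_assoc]
    _ = M' * B / (M * B) := by rw [hBB]; ring_nf
    _ = M' / M := ENNReal.mul_div_mul_right _ _ hB0 hBt
    _ = (x i : ℝ≥0∞) / ((∑ j, x j : ℕ) : ℝ≥0∞) := by
        rw [ENNReal.div_eq_div_iff hs0 hst hM0 hMt, hM, hM', ← Nat.cast_mul, ← Nat.cast_mul,
          Nat.cast_inj]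
        exact (nat_mult_key x i hi).trans (mul_comm _ _)

end
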